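/- If a term M has type T under store context Σ, global context Ψ, and local context Γ at layer 0, then M also has type T under the same contexts at layer 1. -/
import Mathlib


/-! Core syntax of LMML -/

abbrev LVar := String
abbrev GVar := String
abbrev Loc := Nat

inductive Ty : Type where
  | unit : Ty
  | int : Ty
  | arrow : Ty → Ty → Ty
  | ref : Ty → Ty
  | box : List (LVar × Ty) → Ty → Ty

abbrev LCtx := List (LVar × Ty)
abbrev GCtx := List (GVar × (LCtx × Ty))
abbrev SCtx := List (Loc × Ty)

def lookup {κ α : Type} [BEq κ] (l : List (κ × α)) (k : κ) : Option α :=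
  (l.find? (fun p => p.1 == k)).map (·.2)

inductive Tm : Type where
  | unit : Tm
  | int : Int → Tm
  | lvar : LVar → Tm
  | gvar : GVar → List (LVar × Tm) → Tm
  | loc : Loc → Tm
  | lam : LVar → Tm → Tm
  | app : Tm → Tm → Tm
  | rec' : LVar → LVar → Tm → Tm
  | arith : (Int → Int → Int) → Tm → Tm → Tm
  | ite : Tm → Tm → Tm → Tm
  | ref : Tm → Tm
  | deref : Tm → Tm
  | assign : Tm → Tm → Tm
  | box : Tm → Tm
  | letbox : GVar → Tm → Tm → Tm

inductive IsValue : Tm → Prop where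
  | unit : IsValue .unit
  | int {n} : IsValue (.int n)
  | loc {l} : IsValue (.loc l)
  | lvar {x} : IsValue (.lvar x)
  | lam {x M} : IsValue (.lam x M)
  | rec' {f x M} : IsValue (.rec' f x M)
  | box {M} : IsValue (.box M)

def eraseKey {α : Type} (x : String) (l : List (String × α)) : List (String × α) :=
  l.filter (fun p => p.1 ≠ x)

/-! Local substitution (values substituted for local variables; `box` binds
    all local variables; explicit substitutions on global variables compose). -/
mutual
def Tm.lsubst : Tm → List (LVar × Tm) → Tm
  | .unit, _ => .unit
  | .int n, _ => .int n
  | .lvar x, δ => (lookup δ x).getD (.lvar x)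
  | .gvar u δ0, δ => .gvar u (lsubstList δ0 δ)
  | .loc l, _ => .loc l
  | .lam x M, δ => .lam x (M.lsubst (eraseKey x δ))
  | .app M N, δ => .app (M.lsubst δ) (N.lsubst δ)
  | .rec' f x M, δ => .rec' f x (M.lsubst (eraseKey x (eraseKey f δ)))
  | .arith op M N, δ => .arith op (M.lsubst δ) (N.lsubst δ)
  | .ite M N P, δ => .ite (M.lsubst δ) (N.lsubst δ) (P.lsubst δ)
  | .ref M, δ => .ref (M.lsubst δ)
  | .deref M, δ => .deref (M.lsubst δ)
  | .assign M N, δ => .assign (M.lsubst δ) (N.lsubst δ)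
  | .box M, _ => .box M
  | .letbox u M N, δ => .letbox u (M.lsubst δ) (N.lsubst δ)

def lsubstList : List (LVar × Tm) → List (LVar × Tm) → List (LVar × Tm)
  | [], _ => []
  | (x, V) :: rest, δ => (x, V.lsubst δ) :: lsubstList rest δ
end

/-! Global (call-by-name) substitution. -/
mutual
def Tm.gsubst : Tm → List (GVar × Tm) → Tm
  | .unit, _ => .unit
  | .int n, _ => .int n
  | .lvar x, _ => .lvar x
  | .gvar u δ0, σ =>
      match lookup σ u with
      | some M0 => M0.lsubst (gsubstList δ0 σ)
      | none => .gvar u (gsubstList δ0 σ)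
  | .loc l, _ => .loc l
  | .lam x M, σ => .lam x (M.gsubst σ)
  | .app M N, σ => .app (M.gsubst σ) (N.gsubst σ)
  | .rec' f x M, σ => .rec' f x (M.gsubst σ)
  | .arith op M N, σ => .arith op (M.gsubst σ) (N.gsubst σ)
  | .ite M N P, σ => .ite (M.gsubst σ) (N.gsubst σ) (P.gsubst σ)
  | .ref M, σ => .ref (M.gsubst σ)
  | .deref M, σ => .deref (M.gsubst σ)
  | .assign M N, σ => .assign (M.gsubst σ) (N.gsubst σ)
  | .box M, σ => .box (M.gsubst σ)
  | .letbox u M N, σ => .letbox u (M.gsubst σ) (N.gsubst (eraseKey u σ))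

def gsubstList : List (LVar × Tm) → List (GVar × Tm) → List (LVar × Tm)
  | [], _ => []
  | (x, V) :: rest, σ => (x, V.gsubst σ) :: gsubstList rest σ
end

/-! Typing.  The layer index `i` ranges over {0,1}; the box rules are only
    available at layer 1. -/
mutual
inductive Typing : SCtx → GCtx → LCtx → Nat → Tm → Ty → Prop where
  | unit {Sg Ps G i} : Typing Sg Ps G i .unit .unit
  | int {Sg Ps G i n} : Typing Sg Ps G i (.int n) .int
  | lvar {Sg Ps G i x T} : lookup G x = some T → Typing Sg Ps G i (.lvar x) T
  | gvar {Sg Ps G i u δ G' T} :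
      lookup Ps u = some (G', T) → SubstTyping Sg Ps G i δ G' →
      Typing Sg Ps G i (.gvar u δ) T
  | loc {Sg Ps G i l T} : lookup Sg l = some T → Typing Sg Ps G i (.loc l) (.ref T)
  | lam {Sg Ps G i x M T1 T2} :
      Typing Sg Ps ((x, T1) :: G) i M T2 → Typing Sg Ps G i (.lam x M) (.arrow T1 T2)
  | app {Sg Ps G i M1 M2 T1 T2} :
      Typing Sg Ps G i M1 (.arrow T1 T2) → Typing Sg Ps G i M2 T1 →
      Typing Sg Ps G i (.app M1 M2) T2
  | rec' {Sg Ps G i f x M T1 T2} :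
      Typing Sg Ps ((x, T1) :: (f, .arrow T1 T2) :: G) i M T2 →
      Typing Sg Ps G i (.rec' f x M) (.arrow T1 T2)
  | arith {Sg Ps G i op M1 M2} :
      Typing Sg Ps G i M1 .int → Typing Sg Ps G i M2 .int →
      Typing Sg Ps G i (.arith op M1 M2) .int
  | ite {Sg Ps G i M1 M2 M3 T} :
      Typing Sg Ps G i M1 .int → Typing Sg Ps G i M2 T → Typing Sg Ps G i M3 T →
      Typing Sg Ps G i (.ite M1 M2 M3) T
  | ref {Sg Ps G i M T} : Typing Sg Ps G i M T → Typing Sg Ps G i (.ref M) (.ref T)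
  | deref {Sg Ps G i M T} : Typing Sg Ps G i M (.ref T) → Typing Sg Ps G i (.deref M) T
  | assign {Sg Ps G i M1 M2 T} :
      Typing Sg Ps G i M1 (.ref T) → Typing Sg Ps G i M2 T →
      Typing Sg Ps G i (.assign M1 M2) .unit
  | box {Sg Ps G G' M T} :
      Typing Sg Ps G' 0 M T → Typing Sg Ps G 1 (.box M) (.box G' T)
  | letbox {Sg Ps G u M1 M2 G' T T'} :
      Typing Sg Ps G 1 M1 (.box G' T) →
      Typing Sg ((u, (G', T)) :: Ps) G 1 M2 T' →
      Typing Sg Ps G 1 (.letbox u M1 M2) T'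

inductive SubstTyping : SCtx → GCtx → LCtx → Nat → List (LVar × Tm) → LCtx → Prop where
  | nil {Sg Ps G i} : SubstTyping Sg Ps G i [] []
  | cons {Sg Ps G i x V T δ G'} :
      Typing Sg Ps G i V T → IsValue V → SubstTyping Sg Ps G i δ G' →
      SubstTyping Sg Ps G i ((x, V) :: δ) ((x, T) :: G')
end

/-- Typing of a global substitution: `Σ;Ψ ⊢ σ : Ψ'`. -/
def GSubstTyping (Sg : SCtx) (Ps : GCtx) (σ : List (GVar × Tm)) (Ps' : GCtx) : Prop :=
  (∀ u, (lookup Ps' u).isSome ↔ (lookup σ u).isSome) ∧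
  (∀ u G' T, lookup Ps' u = some (G', T) →
    ∃ M, lookup σ u = some M ∧ Typing Sg Ps G' 0 M T)

/-! Heaps and operational semantics -/

abbrev Heap := Loc → Option Tm

def hupdate (h : Heap) (l : Loc) (V : Tm) : Heap :=
  fun l' => if l' = l then some V else h l'

/-- Well-typed heaps: `Σ;Ψ;Γ ⊢ h : heap`. -/
def HeapTyped (Sg : SCtx) (Ps : GCtx) (G : LCtx) (h : Heap) : Prop :=
  (∀ l, (lookup Sg l).isSome ↔ (h l).isSome) ∧
  (∀ l T, lookup Sg l = some T →
    ∃ V, h l = some V ∧ IsValue V ∧ Typing Sg Ps G 1 V T)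

/-- Store context extension. -/
def SCtxLe (Sg Sg' : SCtx) : Prop :=
  ∀ l T, lookup Sg l = some T → lookup Sg' l = some T

/-! Evaluation contexts -/

inductive ECtx : Type where
  | hole : ECtx
  | appL : ECtx → Tm → ECtx
  | appR : Tm → ECtx → ECtx
  | arithL : (Int → Int → Int) → ECtx → Tm → ECtx
  | arithR : (Int → Int → Int) → Tm → ECtx → ECtx
  | ite : ECtx → Tm → Tm → ECtx
  | ref : ECtx → ECtx
  | deref : ECtx → ECtx
  | assignL : ECtx → Tm → ECtx
  | assignR : Tm → ECtx → ECtx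
  | letboxL : GVar → ECtx → Tm → ECtx
  | letboxR : GVar → Tm → ECtx → ECtx

def ECtx.plug : ECtx → Tm → Tm
  | .hole, M => M
  | .appL K N, M => .app (K.plug M) N
  | .appR V K, M => .app V (K.plug M)
  | .arithL op K N, M => .arith op (K.plug M) N
  | .arithR op V K, M => .arith op V (K.plug M)
  | .ite K N P, M => .ite (K.plug M) N P
  | .ref K, M => .ref (K.plug M)
  | .deref K, M => .deref (K.plug M)
  | .assignL K N, M => .assign (K.plug M) N
  | .assignR V K, M => .assign V (K.plug M)
  | .letboxL u K N, M => .letbox u (K.plug M) N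
  | .letboxR u V K, M => .letbox u V (K.plug M)

inductive ECtxWf : ECtx → Prop where
  | hole : ECtxWf .hole
  | appL {K N} : ECtxWf K → ECtxWf (.appL K N)
  | appR {V K} : IsValue V → ECtxWf K → ECtxWf (.appR V K)
  | arithL {op K N} : ECtxWf K → ECtxWf (.arithL op K N)
  | arithR {op V K} : IsValue V → ECtxWf K → ECtxWf (.arithR op V K)
  | ite {K N P} : ECtxWf K → ECtxWf (.ite K N P)
  | ref {K} : ECtxWf K → ECtxWf (.ref K)
  | deref {K} : ECtxWf K → ECtxWf (.deref K)
  | assignL {K N} : ECtxWf K → ECtxWf (.assignL K N)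
  | assignR {V K} : IsValue V → ECtxWf K → ECtxWf (.assignR V K)
  | letboxL {u K N} : ECtxWf K → ECtxWf (.letboxL u K N)
  | letboxR {u V K} : IsValue V → ECtxWf K → ECtxWf (.letboxR u V K)

/-- Small-step operational semantics on (term, heap) pairs. -/
inductive Step : Tm × Heap → Tm × Heap → Prop where
  | beta {x M V h} : IsValue V →
      Step (.app (.lam x M) V, h) (M.lsubst [(x, V)], h)
  | arith {op n m h} :
      Step (.arith op (.int n) (.int m), h) (.int (op n m), h)
  | iteT {n M N h} : n ≠ 0 → Step (.ite (.int n) M N, h) (M, h)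
  | iteF {M N h} : Step (.ite (.int 0) M N, h) (N, h)
  | ref {V l h} : IsValue V → h l = none →
      Step (.ref V, h) (.loc l, hupdate h l V)
  | deref {l V h} : h l = some V → Step (.deref (.loc l), h) (V, h)
  | assign {l V h} : IsValue V → (h l).isSome →
      Step (.assign (.loc l) V, h) (.unit, hupdate h l V)
  | rec' {f x M V h} : IsValue V →
      Step (.app (.rec' f x M) V, h) (M.lsubst [(x, V), (f, .rec' f x M)], h)
  | letbox {u M1 M2 h} :
      Step (.letbox u (.box M1) M2, h) (M2.gsubst [(u, M1)], h)
  | ktx {K M1 M2 h1 h2} : ECtxWf K → K ≠ .hole → Step (M1, h1) (M2, h2) →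
      Step (K.plug M1, h1) (K.plug M2, h2)

abbrev StepStar : Tm × Heap → Tm × Heap → Prop := Relation.ReflTransGen Step

/-- `(M, h) ⇓` : termination. -/
def Terminates (c : Tm × Heap) : Prop :=
  ∃ V h', IsValue V ∧ StepStar c (V, h')

mutual
theorem lifting_aux {Sg Ps G i M T} (h : Typing Sg Ps G i M T) :
    Typing Sg Ps G 1 M T := by
  match h with
  | .unit => exact .unit
  | .int => exact .int
  | .lvar hx => exact .lvar hx
  | .gvar hu hs => exact .gvar hu (lifting_subst_aux hs)
  | .loc hl => exact .loc hl
  | .lam h1 => exact .lam (lifting_aux h1)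
  | .app h1 h2 => exact .app (lifting_aux h1) (lifting_aux h2)
  | .rec' h1 => exact .rec' (lifting_aux h1)
  | .arith h1 h2 => exact .arith (lifting_aux h1) (lifting_aux h2)
  | .ite h1 h2 h3 => exact .ite (lifting_aux h1) (lifting_aux h2) (lifting_aux h3)
  | .ref h1 => exact .ref (lifting_aux h1)
  | .deref h1 => exact .deref (lifting_aux h1)
  | .assign h1 h2 => exact .assign (lifting_aux h1) (lifting_aux h2)
  | .box h1 => exact .box h1
  | .letbox h1 h2 => exact .letbox h1 h2

theorem lifting_subst_aux {Sg Ps G i δ G'} (h : SubstTyping Sg Ps G i δ G') :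
    SubstTyping Sg Ps G 1 δ G' := by
  match h with
  | .nil => exact .nil
  | .cons h1 hv h2 => exact .cons (lifting_aux h1) hv (lifting_subst_aux h2)
end

/-- **Lifting**: a term typable at layer 0 is typable at layer 1. -/
theorem lifting {Sg : SCtx} {Ps : GCtx} {G : LCtx} {M : Tm} {T : Ty}
    (h : Typing Sg Ps G 0 M T) : Typing Sg Ps G 1 M T :=
  lifting_aux h
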